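/- arXiv:1709.09000 — 2 statements merged into one kernel-verified Lean document; each statement's English description precedes it below -/
import Mathlib

section
/- In the ring ℤ⟦X⟧ of formal power series over ℤ, the power series whose E-th coefficient is Σ_{k=1}^{E-2} ⌊(E-k)/2⌋, multiplied by (1+X)·(1-X)³, equals X³. -/
/-!
Reindexing by `j = E - k` shows that the coefficients are the partial sums `∑_{j < E} ⌊j/2⌋`,
and `⌊j/2⌋` is in turn the partial sum `∑_{i < j} (i mod 2)`. Multiplying a series by `1 - X`
undoes a partial summation at the cost of a factor `X`, and the `2`-periodic series
`∑ (i mod 2) Xⁱ = X / (1 - X²)` is cleared by `1 - X²`. Since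
`(1 + X)(1 - X)³ = (1 - X)(1 - X)(1 - X²)`, the product is `X · X · X`.
-/

open PowerSeries

theorem Nat.sum_Icc_sub_div_two_eq_sum_range (E : ℕ) :
    ∑ k ∈ Finset.Icc 1 (E - 2), (E - k) / 2 = ∑ j ∈ Finset.range E, j / 2 := by
  rcases Nat.lt_or_ge E 2 with hE | hE
  · interval_cases E <;> rfl
  obtain ⟨n, rfl⟩ := Nat.exists_eq_add_of_le' hE
  rw [Finset.sum_range_succ', Finset.sum_range_succ']
  simp only [Nat.add_sub_cancel, add_assoc, Nat.reduceAdd, Nat.reduceDiv, add_zero]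
  apply Finset.sum_nbij' (fun k => n - k) (fun j => n - j) <;> simp <;> omega

theorem Nat.div_two_eq_sum_range_mod_two (n : ℕ) : n / 2 = ∑ i ∈ Finset.range n, i % 2 := by
  induction n with
  | zero => rfl
  | succ n ih => rw [Finset.sum_range_succ, ← ih]; omega

namespace PowerSeries

variable {R : Type*} [Ring R]

theorem mk_sum_range_mul_one_sub_X (f : ℕ → R) :
    mk (fun n => ∑ i ∈ Finset.range n, f i) * (1 - X) = X * mk f := by
  ext (_ | n)
  · simp
  · rw [mul_sub, mul_one, map_sub, coeff_succ_mul_X, coeff_succ_X_mul, coeff_mk, coeff_mk,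
      coeff_mk, Finset.sum_range_succ, add_sub_cancel_left]

theorem mk_mod_two_mul_one_sub_X_sq :
    mk (fun n => ((n % 2 : ℕ) : R)) * (1 - X ^ 2) = X := by
  ext (_ | _ | n) <;> simp [coeff_mul_X_pow', coeff_X, mul_sub, add_assoc]

end PowerSeries

theorem linear_chain_gf :
    (PowerSeries.mk fun E : ℕ =>
        ((∑ k ∈ Finset.Icc 1 (E - 2), (E - k) / 2 : ℕ) : ℤ)) *
      ((1 + PowerSeries.X) * (1 - PowerSeries.X) ^ 3) =
      (PowerSeries.X : PowerSeries ℤ) ^ 3 := by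
  have floor_half :
      mk (fun j => ((j / 2 : ℕ) : ℤ)) = mk fun j => ∑ i ∈ Finset.range j, ((i % 2 : ℕ) : ℤ) := by
    simp_rw [Nat.div_two_eq_sum_range_mod_two, Nat.cast_sum]
  have coeffs :
      (mk fun E => ((∑ k ∈ Finset.Icc 1 (E - 2), (E - k) / 2 : ℕ) : ℤ)) =
        mk fun E => ∑ j ∈ Finset.range E, ((j / 2 : ℕ) : ℤ) := by
    simp_rw [Nat.sum_Icc_sub_div_two_eq_sum_range, Nat.cast_sum]
  calc _ = mk (fun E => ∑ j ∈ Finset.range E, ((j / 2 : ℕ) : ℤ)) * (1 - X) * (1 - X) *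
          (1 - X ^ 2) := by rw [coeffs]; ring
    _ = X * (mk (fun j => ∑ i ∈ Finset.range j, ((i % 2 : ℕ) : ℤ)) * (1 - X)) * (1 - X ^ 2) := by
      rw [mk_sum_range_mul_one_sub_X, floor_half]; ring
    _ = X * X * (mk (fun i => ((i % 2 : ℕ) : ℤ)) * (1 - X ^ 2)) := by
      rw [mk_sum_range_mul_one_sub_X]; ring
    _ = X ^ 3 := by rw [mk_mod_two_mul_one_sub_X_sq]; ring
end

section
/- In the ring ℤ⟦X⟧ of formal power series over ℤ, the power series whose E-th coefficient is Σ_{k=2}^{E-2} (k-1)·⌊(E-k)/2⌋, multiplied by (1+X)·(1-X)⁴, equals X⁴. -/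
/-! The series factors as the Cauchy product of `∑ (k - 1) Xᵏ = X² / (1 - X)²` and
`∑ ⌊j / 2⌋ Xʲ = X² / ((1 + X)(1 - X)²)`; clearing each denominator separately is a
coefficientwise check. -/

open PowerSeries

namespace PowerSeries

theorem mk_natPred_mul_one_sub_X_sq :
    (mk fun k : ℕ => ((k - 1 : ℕ) : ℤ)) * (1 - X) ^ 2 = X ^ 2 := by
  set a : ℤ⟦X⟧ := mk fun k : ℕ => ((k - 1 : ℕ) : ℤ) with ha
  rw [show a * (1 - X) ^ 2 = a - a * X ^ 1 - a * X ^ 1 + a * X ^ 2 by ring]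
  ext n
  simp only [map_add, map_sub, coeff_mul_X_pow', ha, coeff_mk, coeff_X_pow]
  split_ifs <;> omega

theorem mk_natHalf_mul_one_add_X_mul_one_sub_X_sq :
    (mk fun j : ℕ => ((j / 2 : ℕ) : ℤ)) * ((1 + X) * (1 - X) ^ 2) = X ^ 2 := by
  set b : ℤ⟦X⟧ := mk fun j : ℕ => ((j / 2 : ℕ) : ℤ) with hb
  rw [show b * ((1 + X) * (1 - X) ^ 2) = b - b * X ^ 1 - b * X ^ 2 + b * X ^ 3 by ring]
  ext n
  simp only [map_add, map_sub, coeff_mul_X_pow', hb, coeff_mk, coeff_X_pow]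
  split_ifs <;> omega

theorem mk_sum_natPred_mul_natHalf :
    (mk fun E : ℕ => ((∑ k ∈ Finset.Icc 2 (E - 2), (k - 1) * ((E - k) / 2) : ℕ) : ℤ)) =
      (mk fun k : ℕ => ((k - 1 : ℕ) : ℤ)) * mk fun j : ℕ => ((j / 2 : ℕ) : ℤ) := by
  ext E
  rw [coeff_mul, Finset.Nat.sum_antidiagonal_eq_sum_range_succ_mk]
  simp only [coeff_mk, Nat.cast_sum, Nat.cast_mul]
  apply Finset.sum_subset
  · intro k hk
    rw [Finset.mem_Icc] at hk
    rw [Finset.mem_range]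
    omega
  · -- outside `2 ≤ k ≤ E - 2`, either `k - 1` or `(E - k) / 2` is zero
    intro k hk hk'
    rw [Finset.mem_range] at hk
    rw [Finset.mem_Icc] at hk'
    rcases le_or_gt k 1 with hk1 | hk1
    · simp [Nat.sub_eq_zero_of_le hk1]
    · simp [show (E - k) / 2 = 0 by omega]

end PowerSeries

theorem triangle_pendant_gf :
    (PowerSeries.mk fun E : ℕ =>
        ((∑ k ∈ Finset.Icc 2 (E - 2), (k - 1) * ((E - k) / 2) : ℕ) : ℤ)) *
      ((1 + PowerSeries.X) * (1 - PowerSeries.X) ^ 4) =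
      (PowerSeries.X : PowerSeries ℤ) ^ 4 := by
  rw [mk_sum_natPred_mul_natHalf]
  calc _ = ((mk fun k : ℕ => ((k - 1 : ℕ) : ℤ)) * (1 - X) ^ 2) *
        ((mk fun j : ℕ => ((j / 2 : ℕ) : ℤ)) * ((1 + X) * (1 - X) ^ 2)) := by ring
    _ = X ^ 4 := by
      rw [mk_natPred_mul_one_sub_X_sq, mk_natHalf_mul_one_add_X_mul_one_sub_X_sq, ← pow_add]
end
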